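/- arXiv:2501.07281 — 2 statements merged into one kernel-verified Lean document; each statement's English description precedes it below -/
import Mathlib

section
/- For all a ∈ ℂ, c, c' ∈ ℂ \ ℤ_{≤0} and all complex x, y, Ψ₂[a;c,c';x,y] = e^x · Σ_{n≥0} ((a)_n/(c')_n) · ₁F₁[c−a−n; c; −x] · y^n/n!. -/
/-!
Summing the double series of `Ψ₂` over `m` first and using `(a)_{m+n} = (a)_n (a+n)_m` gives
`Ψ₂ = Σₙ (a)ₙ/(c')ₙ ₁F₁[a+n; c; x] yⁿ/n!`; the interchange is legitimate because, away from the
poles `c, c' ∈ ℤ_{≤0}`, the coefficients `(a)_{m+n}/((c)ₘ (c')ₙ)` grow at most geometrically.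
Kummer's transformation then rewrites each `₁F₁`. Kummer's transformation itself is the Cauchy
product of `eˣ` with `₁F₁[c-b; c; -x]`, whose `n`-th coefficient collapses by Chu–Vandermonde:
`Σⱼ C(n,j) (-1)ʲ (c-b)ⱼ/(c)ⱼ = (b)ₙ/(c)ₙ`.
-/

open Complex

/-- Pochhammer symbol (rising factorial) on `ℂ`. -/
noncomputable def poch (a : ℂ) (n : ℕ) : ℂ := (ascPochhammer ℂ n).eval a

/-- Kummer confluent hypergeometric function `₁F₁[a; c; z]`. -/
noncomputable def F11 (a c z : ℂ) : ℂ :=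
  ∑' n : ℕ, poch a n / poch c n * z ^ n / (Nat.factorial n : ℂ)

/-- The Humbert function `Ψ₂[a; c, c'; x, y]` defined by its double series. -/
noncomputable def Psi2 (a c c' x y : ℂ) : ℂ :=
  ∑' p : ℕ × ℕ, poch a (p.1 + p.2) / (poch c p.1 * poch c' p.2) *
    x ^ p.1 * y ^ p.2 / ((Nat.factorial p.1 : ℂ) * (Nat.factorial p.2 : ℂ))

open Finset Filter
open scoped Nat

lemma poch_eq_prod_range (a : ℂ) (n : ℕ) : poch a n = ∏ j ∈ range n, (a + j) := by
  induction n with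
  | zero => simp [poch]
  | succ n ih => rw [poch, ascPochhammer_succ_eval, ← poch, ih, prod_range_succ]

lemma poch_add (a : ℂ) (m n : ℕ) : poch a (m + n) = poch a m * poch (a + m) n := by
  simpa [poch, Polynomial.eval_comp] using
    congrArg (Polynomial.eval a) (ascPochhammer_mul ℂ m n).symm

lemma poch_ne_zero {c : ℂ} (hc : ∀ n : ℕ, c ≠ -n) (m : ℕ) : poch c m ≠ 0 := by
  rw [poch, Ne, ascPochhammer_eval_eq_zero_iff]
  rintro ⟨k, -, hk⟩
  exact hc k (by rw [hk, neg_neg])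

lemma neg_one_pow_mul_poch (z : ℂ) (n : ℕ) : (-1) ^ n * poch z n = poch (-z - n + 1) n := by
  rw [poch, ← neg_neg z, ascPochhammer_eval_neg_eq_descPochhammer, ← mul_assoc, ← pow_add,
    Even.neg_one_pow ⟨n, rfl⟩, one_mul, descPochhammer_eval_eq_ascPochhammer, neg_neg, poch]

lemma descPochhammer_smeval_eq_poch (r : ℂ) (n : ℕ) :
    (descPochhammer ℤ n).smeval r = poch (r - n + 1) n := by
  rw [Polynomial.descPochhammer_smeval_eq_ascPochhammer, Polynomial.ascPochhammer_smeval_eq_eval,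
    poch]

lemma sum_antidiagonal_choose_mul_poch_mul_neg_one_pow_mul_poch (b c : ℂ) (n : ℕ) :
    ∑ ij ∈ antidiagonal n,
      (n.choose ij.1 : ℂ) * (poch (c + ij.2) ij.1 * ((-1) ^ ij.2 * poch (c - b) ij.2)) =
      poch b n := by
  -- Chu–Vandermonde for falling factorials at `(c + n - 1) + (b - c)`
  have h := Ring.descPochhammer_smeval_add (r := c + n - 1) (s := b - c) n (Commute.all _ _)
  rw [descPochhammer_smeval_eq_poch, show c + n - 1 + (b - c) - n + 1 = b by ring] at h
  refine (sum_congr rfl fun ij hij => ?_).trans h.symm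
  obtain rfl := mem_antidiagonal.1 hij
  rw [descPochhammer_smeval_eq_poch, descPochhammer_smeval_eq_poch, neg_one_pow_mul_poch]
  push_cast
  ring_nf

lemma sum_antidiagonal_choose_mul_neg_one_pow_mul_poch_div_poch (b : ℂ) {c : ℂ}
    (hc : ∀ n : ℕ, c ≠ -n) (n : ℕ) :
    ∑ ij ∈ antidiagonal n, (n.choose ij.1 : ℂ) * ((-1) ^ ij.2 * poch (c - b) ij.2 / poch c ij.2) =
      poch b n / poch c n := by
  rw [eq_div_iff (poch_ne_zero hc n), sum_mul,
    ← sum_antidiagonal_choose_mul_poch_mul_neg_one_pow_mul_poch b c n]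
  refine sum_congr rfl fun ij hij => ?_
  rw [← mem_antidiagonal.1 hij, add_comm, poch_add]
  field_simp [poch_ne_zero hc ij.2]

lemma prod_range_mul_add_one (r : ℝ) (m : ℕ) : ∏ j ∈ range m, r * (j + 1) = r ^ m * m ! := by
  rw [prod_mul_distrib, prod_const, card_range, ← prod_range_add_one_eq_factorial]
  push_cast
  rfl

lemma norm_poch_le (a : ℂ) (k : ℕ) : ‖poch a k‖ ≤ (‖a‖ + 1) ^ k * k ! := by
  rw [poch_eq_prod_range, norm_prod, ← prod_range_mul_add_one]
  refine prod_le_prod (fun _ _ => norm_nonneg _) fun j _ => ?_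
  have := norm_add_le a j
  rw [Complex.norm_natCast] at this
  nlinarith [norm_nonneg a, j.cast_nonneg (α := ℝ)]

lemma exists_pos_forall_le_of_eventually_le {f : ℕ → ℝ} (hf : ∀ j, 0 < f j) {ε : ℝ}
    (hε : 0 < ε) (hev : ∀ᶠ j in atTop, ε ≤ f j) : ∃ δ > 0, ∀ j, δ ≤ f j := by
  obtain ⟨N, hN⟩ := eventually_atTop.1 hev
  obtain ⟨j₀, -, hj₀⟩ := (range (N + 1)).exists_min_image f nonempty_range_add_one
  refine ⟨min ε (f j₀), lt_min hε (hf j₀), fun j => ?_⟩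
  rcases lt_or_ge j N with hj | hj
  · exact (min_le_right _ _).trans (hj₀ j (mem_range.2 (by omega)))
  · exact (min_le_left _ _).trans (hN j hj)

lemma exists_pow_mul_factorial_le_norm_poch {c : ℂ} (hc : ∀ n : ℕ, c ≠ -n) :
    ∃ δ > 0, ∀ m : ℕ, δ ^ m * m ! ≤ ‖poch c m‖ := by
  have hpos (j : ℕ) : 0 < ‖c + j‖ / (j + 1) :=
    div_pos (norm_pos_iff.2 fun h => hc j (eq_neg_of_add_eq_zero_left h)) (by positivity)
  -- once `j ≥ 2‖c‖ + 1`, `‖c + j‖ ≥ j - ‖c‖ ≥ (j + 1) / 2`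
  have hev : ∀ᶠ j : ℕ in atTop, 1 / 2 ≤ ‖c + j‖ / (j + 1) := by
    filter_upwards [tendsto_natCast_atTop_atTop.eventually_ge_atTop (2 * ‖c‖ + 1)] with j hj
    have := norm_sub_norm_le (j : ℂ) (-c)
    rw [norm_neg, Complex.norm_natCast, sub_neg_eq_add, add_comm] at this
    rw [le_div_iff₀ (by positivity)]
    linarith
  obtain ⟨δ, hδ, hle⟩ := exists_pos_forall_le_of_eventually_le hpos one_half_pos hev
  refine ⟨δ, hδ, fun m => ?_⟩
  rw [poch_eq_prod_range, norm_prod, ← prod_range_mul_add_one]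
  exact prod_le_prod (fun _ _ => by positivity) fun j _ => (le_div_iff₀ (by positivity)).1 (hle j)

lemma exists_norm_poch_div_poch_le (b : ℂ) {c : ℂ} (hc : ∀ n : ℕ, c ≠ -n) :
    ∃ r : ℝ, ∀ m : ℕ, ‖poch b m / poch c m‖ ≤ r ^ m := by
  obtain ⟨δ, hδ, hle⟩ := exists_pow_mul_factorial_le_norm_poch hc
  refine ⟨(‖b‖ + 1) / δ, fun m => ?_⟩
  rw [norm_div, div_le_iff₀ (norm_pos_iff.2 (poch_ne_zero hc m))]
  calc ‖poch b m‖ ≤ (‖b‖ + 1) ^ m * m ! := norm_poch_le b m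
    _ = ((‖b‖ + 1) / δ) ^ m * (δ ^ m * m !) := by rw [div_pow]; field_simp
    _ ≤ ((‖b‖ + 1) / δ) ^ m * ‖poch c m‖ := by gcongr; exact hle m

lemma exists_norm_poch_add_div_poch_mul_poch_le (a : ℂ) {c c' : ℂ} (hc : ∀ n : ℕ, c ≠ -n)
    (hc' : ∀ n : ℕ, c' ≠ -n) :
    ∃ r s : ℝ, ∀ m n : ℕ, ‖poch a (m + n) / (poch c m * poch c' n)‖ ≤ r ^ m * s ^ n := by
  obtain ⟨δ, hδ, hle⟩ := exists_pow_mul_factorial_le_norm_poch hc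
  obtain ⟨δ', hδ', hle'⟩ := exists_pow_mul_factorial_le_norm_poch hc'
  refine ⟨2 * (‖a‖ + 1) / δ, 2 * (‖a‖ + 1) / δ', fun m n => ?_⟩
  have hfac : ((m + n) ! : ℝ) ≤ 2 ^ (m + n) * (m ! * n !) := by
    rw [← Nat.add_choose_mul_factorial_mul_factorial m n, mul_assoc]
    exact_mod_cast Nat.mul_le_mul_right _ (Nat.choose_le_two_pow _ _)
  rw [norm_div, norm_mul, div_le_iff₀ (mul_pos (norm_pos_iff.2 (poch_ne_zero hc m))
    (norm_pos_iff.2 (poch_ne_zero hc' n)))]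
  calc ‖poch a (m + n)‖ ≤ (‖a‖ + 1) ^ (m + n) * (m + n) ! := norm_poch_le a _
    _ ≤ (‖a‖ + 1) ^ (m + n) * (2 ^ (m + n) * (m ! * n !)) := by gcongr
    _ = (2 * (‖a‖ + 1) / δ) ^ m * (2 * (‖a‖ + 1) / δ') ^ n * ((δ ^ m * m !) * (δ' ^ n * n !)) := by
      rw [div_pow, div_pow, mul_pow, mul_pow, pow_add, pow_add]
      field_simp
    _ ≤ (2 * (‖a‖ + 1) / δ) ^ m * (2 * (‖a‖ + 1) / δ') ^ n * (‖poch c m‖ * ‖poch c' n‖) := by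
      gcongr
      exacts [hle m, hle' n]

section ExpTypeSeries

variable {𝕜 : Type*} [RCLike 𝕜]

lemma summable_norm_mul_pow_div_factorial {f : ℕ → 𝕜} {r : ℝ} (hf : ∀ m, ‖f m‖ ≤ r ^ m)
    (x : 𝕜) : Summable fun m => ‖f m * x ^ m / (m ! : 𝕜)‖ := by
  refine (Real.summable_pow_div_factorial (|r| * ‖x‖)).of_nonneg_of_le (fun _ => norm_nonneg _)
    fun m => ?_
  rw [norm_div, norm_mul, norm_pow, RCLike.norm_natCast, mul_pow, ← abs_pow]
  gcongr
  exact (hf m).trans (le_abs_self _)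

lemma summable_mul_pow_mul_pow_div_factorial {f : ℕ × ℕ → 𝕜} {r s : ℝ}
    (hf : ∀ p, ‖f p‖ ≤ r ^ p.1 * s ^ p.2) (x y : 𝕜) :
    Summable fun p : ℕ × ℕ => f p * x ^ p.1 * y ^ p.2 / (p.1 ! * p.2 !) := by
  refine Summable.of_norm_bounded ((Real.summable_pow_div_factorial (|r| * ‖x‖)).mul_of_nonneg
    (Real.summable_pow_div_factorial (|s| * ‖y‖)) (fun _ => by positivity) fun _ => by positivity)
    fun p => ?_
  have hfp : ‖f p‖ ≤ |r| ^ p.1 * |s| ^ p.2 := by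
    rw [← abs_pow, ← abs_pow, ← abs_mul]
    exact (hf p).trans (le_abs_self _)
  calc ‖f p * x ^ p.1 * y ^ p.2 / (p.1 ! * p.2 !)‖
      = ‖f p‖ * ‖x‖ ^ p.1 * ‖y‖ ^ p.2 / (p.1 ! * p.2 !) := by
        simp only [norm_div, norm_mul, norm_pow, RCLike.norm_natCast]
    _ ≤ |r| ^ p.1 * |s| ^ p.2 * ‖x‖ ^ p.1 * ‖y‖ ^ p.2 / (p.1 ! * p.2 !) := by gcongr
    _ = (|r| * ‖x‖) ^ p.1 / p.1 ! * ((|s| * ‖y‖) ^ p.2 / p.2 !) := by ring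

end ExpTypeSeries

theorem exp_mul_F11_sub_neg (b : ℂ) {c : ℂ} (hc : ∀ n : ℕ, c ≠ -n) (x : ℂ) :
    exp x * F11 (c - b) c (-x) = F11 b c x := by
  obtain ⟨r, hr⟩ := exists_norm_poch_div_poch_le (c - b) hc
  rw [exp_eq_exp_ℂ, ← (NormedSpace.expSeries_div_hasSum_exp x).tsum_eq, F11, F11,
    tsum_mul_tsum_eq_tsum_sum_antidiagonal_of_summable_norm
      (NormedSpace.norm_expSeries_div_summable x) (summable_norm_mul_pow_div_factorial hr (-x))]
  refine tsum_congr fun n => ?_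
  rw [← sum_antidiagonal_choose_mul_neg_one_pow_mul_poch_div_poch b hc n, sum_mul, sum_div]
  refine sum_congr rfl fun ij hij => ?_
  obtain ⟨i, j⟩ := ij
  obtain rfl := mem_antidiagonal.1 hij
  dsimp only
  rw [Nat.choose_symm_add, ← Nat.add_choose_mul_factorial_mul_factorial i j, neg_pow, pow_add]
  have hchoose : ((i + j).choose j : ℂ) ≠ 0 := Nat.cast_ne_zero.2 (Nat.choose_pos le_add_self).ne'
  push_cast
  field_simp

lemma Psi2_eq_tsum_F11 (a : ℂ) {c c' : ℂ} (hc : ∀ n : ℕ, c ≠ -n) (hc' : ∀ n : ℕ, c' ≠ -n)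
    (x y : ℂ) :
    Psi2 a c c' x y = ∑' n : ℕ, poch a n / poch c' n * y ^ n / n ! * F11 (a + n) c x := by
  obtain ⟨r, s, hrs⟩ := exists_norm_poch_add_div_poch_mul_poch_le a hc hc'
  have hsum := summable_mul_pow_mul_pow_div_factorial (fun p => hrs p.1 p.2) x y
  rw [Psi2, hsum.tsum_prod, ← Summable.tsum_comm ?_]
  · refine tsum_congr fun n => ?_
    rw [F11, ← tsum_mul_left]
    refine tsum_congr fun m => ?_
    rw [add_comm, poch_add]
    ring
  · exact hsum

/-- `Ψ₂[a;c,c';x,y] = Σ_{n≥0} ((a)_n/(c')_n) ₁F₁[a+n; c; x] y^n/n!`. -/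
theorem psi2_kummer_expansion (a c c' x y : ℂ)
    (hc : ∀ n : ℕ, c ≠ -n) (hc' : ∀ n : ℕ, c' ≠ -n) :
    Psi2 a c c' x y
      = Complex.exp x * ∑' n : ℕ, poch a n / poch c' n * F11 (c - a - n) c (-x) * y ^ n /
          (Nat.factorial n : ℂ) := by
  rw [Psi2_eq_tsum_F11 a hc hc', ← tsum_mul_left]
  refine tsum_congr fun n => ?_
  rw [← exp_mul_F11_sub_neg (a + n) hc x, sub_add_eq_sub_sub]
  ring
end

section
/- For Re(a) > 0, b ∈ ℂ, c, c' ∈ ℂ \ ℤ_{≤0}, x real with 0 < x, and y > 0 with y²/x in the domain of convergence, the Humbert function Ψ₁ admits the integral representation Ψ₁[a,b;c,c';−x, y²/x] = (2Γ(c')/Γ(a)) · x^{−a} · (y/x)^{1−c'} · ∫₀^∞ w^{2a−c'} e^{−w²/x} ₁F₁[b;c;−w²] I_{c'−1}(2(y/x)w) dw. -/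
open Complex MeasureTheory Filter Topology

/-- Confluent hypergeometric limit function `₀F₁[−; b; z]`. -/
noncomputable def F01 (b z : ℂ) : ℂ :=
  ∑' k : ℕ, z ^ k / (poch b k * (Nat.factorial k : ℂ))

/-- The Humbert function `Ψ₁[a,b;c,c';x,y]` given by its Laplace-type integral
representation, valid for `Re a > 0` and `Re x < 1` (and providing the analytic
continuation of the double series to negative real `x`). -/
noncomputable def Psi1 (a b c c' x y : ℂ) : ℂ :=
  (Complex.Gamma a)⁻¹ *
    ∫ u in Set.Ioi (0 : ℝ), (u : ℂ) ^ (a - 1) * Complex.exp (-(u : ℂ)) *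
      F11 b c (x * u) * F01 c' (y * u)

/-- Modified Bessel function of the first kind `I_ν(z)` (principal branch). -/
noncomputable def besselI (ν z : ℂ) : ℂ :=
  (z / 2) ^ ν * ∑' k : ℕ, (z ^ 2 / 4) ^ k /
    ((Nat.factorial k : ℂ) * Complex.Gamma (ν + k + 1))

/-! Substituting `u = w² / x` in the Laplace-type integral defining `Ψ₁` turns
`₁F₁[b; c; -x u]` into `₁F₁[b; c; -w²]` and `₀F₁[c'; y² u / x]` into `₀F₁[c'; ((y/x) w)²]`,
which is a Bessel function by `Γ(c') I_{c'-1}(z) = (z/2)^{c'-1} ₀F₁[c'; z²/4]` with `z = 2 (y/x) w`.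
The Jacobian `2w/x` and the powers of `w`, `x` and `y/x` then collect into the stated prefactor. -/

open Set

namespace Complex

theorem ofReal_sq_cpow {w : ℝ} (hw : 0 ≤ w) (s : ℂ) : ((w : ℂ) ^ 2) ^ s = (w : ℂ) ^ (2 * s) := by
  rw [cpow_ofNat_mul'] <;> simp [arg_ofReal_of_nonneg hw, Real.pi_pos, Real.pi_pos.le]

theorem ofReal_sq_div_cpow {w x : ℝ} (hw : 0 ≤ w) (hx : 0 ≤ x) (s : ℂ) :
    ((w ^ 2 / x : ℝ) : ℂ) ^ s = (w : ℂ) ^ (2 * s) / (x : ℂ) ^ s := by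
  rw [ofReal_div, div_cpow_ofReal_nonneg (by positivity) hx, ofReal_pow, ofReal_sq_cpow hw]

end Complex

theorem Gamma_add_nat_eq_poch_mul {c : ℂ} (hc : ∀ n : ℕ, c ≠ -n) (k : ℕ) :
    Gamma (c + k) = poch c k * Gamma c := by
  rw [poch, ← Gamma_add_nat_div_Gamma_eq c hc, div_mul_cancel₀ _ (Gamma_ne_zero hc)]

theorem Gamma_mul_besselI_sub_one {c : ℂ} (hc : ∀ n : ℕ, c ≠ -n) (z : ℂ) :
    Gamma c * besselI (c - 1) z = (z / 2) ^ (c - 1) * F01 c (z ^ 2 / 4) := by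
  rw [besselI, F01, mul_left_comm, ← tsum_mul_left]
  congr 1
  refine tsum_congr fun k => ?_
  rw [show c - 1 + k + 1 = c + k by ring, Gamma_add_nat_eq_poch_mul hc k]
  field_simp [Gamma_ne_zero hc]

theorem integral_comp_sq_div_Ioi {E : Type*} [NormedAddCommGroup E] [NormedSpace ℝ E]
    (f : ℝ → E) {x : ℝ} (hx : 0 < x) :
    ∫ w in Ioi 0, (2 * w / x) • f (w ^ 2 / x) = ∫ u in Ioi 0, f u := by
  have himage : (fun w : ℝ => w ^ 2 / x) '' Ioi 0 = Ioi 0 := by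
    ext u
    refine ⟨fun ⟨w, hw, hwu⟩ => hwu ▸ by simp only [mem_Ioi] at hw ⊢; positivity, fun hu => ?_⟩
    refine ⟨√(u * x), Real.sqrt_pos.2 (mul_pos hu hx), ?_⟩
    dsimp only
    rw [Real.sq_sqrt (mul_pos hu hx).le, mul_div_cancel_right₀ _ hx.ne']
  have hderiv : ∀ w ∈ Ioi (0 : ℝ),
      HasDerivWithinAt (fun w : ℝ => w ^ 2 / x) (2 * w / x) (Ioi 0) w := fun w _ => by
    simpa using ((hasDerivAt_pow 2 w).div_const x).hasDerivWithinAt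
  have hinj : InjOn (fun w : ℝ => w ^ 2 / x) (Ioi 0) := fun w₁ h₁ w₂ h₂ h =>
    (pow_left_inj₀ (le_of_lt h₁) (le_of_lt h₂) two_ne_zero).1 ((div_left_inj' hx.ne').1 h)
  conv_rhs =>
    rw [← himage, integral_image_eq_integral_abs_deriv_smul measurableSet_Ioi hderiv hinj]
  refine setIntegral_congr_fun measurableSet_Ioi fun w hw => ?_
  rw [abs_of_pos (by simp only [mem_Ioi] at hw; positivity)]

theorem psi1_integrand_comp_sq_div (a b c c' : ℂ) (hc' : ∀ n : ℕ, c' ≠ -n) {x y w : ℝ}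
    (hx : 0 < x) (hy : 0 < y) (hw : 0 < w) :
    (2 * w / x) • (((w ^ 2 / x : ℝ) : ℂ) ^ (a - 1) * exp (-((w ^ 2 / x : ℝ) : ℂ)) *
        F11 b c (-(x : ℂ) * ((w ^ 2 / x : ℝ) : ℂ)) *
        F01 c' ((y : ℂ) ^ 2 / x * ((w ^ 2 / x : ℝ) : ℂ)))
      = 2 * Gamma c' * (x : ℂ) ^ (-a) * ((y : ℂ) / x) ^ (1 - c') *
        ((w : ℂ) ^ (2 * a - c') * exp (-(w : ℂ) ^ 2 / x) * F11 b c (-(w : ℂ) ^ 2) *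
          besselI (c' - 1) (2 * ((y : ℂ) / x) * w)) := by
  have hW : (w : ℂ) ≠ 0 := ofReal_ne_zero.2 hw.ne'
  have hX : (x : ℂ) ≠ 0 := ofReal_ne_zero.2 hx.ne'
  have hyx : (y : ℂ) / x = ((y / x : ℝ) : ℂ) := by push_cast; rfl
  have hYX : (y : ℂ) / x ≠ 0 := div_ne_zero (ofReal_ne_zero.2 hy.ne') hX
  have hjacobian : ((2 * w / x : ℝ) : ℂ) * ((w ^ 2 / x : ℝ) : ℂ) ^ (a - 1)
      = 2 * (x : ℂ) ^ (-a) * ((w : ℂ) ^ (2 * a - c') * (w : ℂ) ^ (c' - 1)) := by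
    have hxa : (x : ℂ) ^ a = (x : ℂ) ^ (a - 1) * x := by
      conv_lhs => rw [← sub_add_cancel a 1, cpow_add _ _ hX, cpow_one]
    rw [ofReal_sq_div_cpow hw.le hx.le, ← cpow_add _ _ hW, cpow_neg, hxa,
      show 2 * a - c' + (c' - 1) = 2 * (a - 1) + 1 by ring, cpow_add _ _ hW, cpow_one]
    push_cast
    field_simp
  have hbessel : Gamma c' * besselI (c' - 1) (2 * ((y : ℂ) / x) * w)
      = ((y : ℂ) / x) ^ (c' - 1) * (w : ℂ) ^ (c' - 1) *
          F01 c' ((y : ℂ) ^ 2 / x * ((w ^ 2 / x : ℝ) : ℂ)) := by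
    rw [Gamma_mul_besselI_sub_one hc', show 2 * ((y : ℂ) / x) * w / 2 = (y : ℂ) / x * w by ring,
      hyx, mul_cpow_ofReal_nonneg (by positivity) hw.le]
    congr 2
    push_cast
    ring
  have hcancel : ((y : ℂ) / x) ^ (1 - c') * ((y : ℂ) / x) ^ (c' - 1) = 1 := by
    rw [← cpow_add _ _ hYX, show 1 - c' + (c' - 1) = 0 by ring, cpow_zero]
  rw [Complex.real_smul, show -(x : ℂ) * ((w ^ 2 / x : ℝ) : ℂ) = -(w : ℂ) ^ 2 by
      push_cast; field_simp,
    show -((w ^ 2 / x : ℝ) : ℂ) = -(w : ℂ) ^ 2 / x by push_cast; ring]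
  set E := exp (-(w : ℂ) ^ 2 / x)
  set F := F11 b c (-(w : ℂ) ^ 2)
  set G := F01 c' ((y : ℂ) ^ 2 / x * ((w ^ 2 / x : ℝ) : ℂ))
  linear_combination (E * F * G) * hjacobian
    - (2 * (x : ℂ) ^ (-a) * ((y : ℂ) / x) ^ (1 - c') * (w : ℂ) ^ (2 * a - c') * E * F) * hbessel
    - (2 * (x : ℂ) ^ (-a) * (w : ℂ) ^ (2 * a - c') * (w : ℂ) ^ (c' - 1) * E * F * G) * hcancel

theorem psi1_bessel_integral_rep_general (a b c c' : ℂ) (x y : ℝ)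
    (hc' : ∀ n : ℕ, c' ≠ -n)
    (hx : 0 < x) (hy : 0 < y) :
    Psi1 a b c c' (-(x : ℂ)) ((y : ℂ) ^ 2 / x)
      = 2 * Complex.Gamma c' / Complex.Gamma a * (x : ℂ) ^ (-a) *
          ((y : ℂ) / x) ^ (1 - c') *
          ∫ w in Set.Ioi (0 : ℝ), (w : ℂ) ^ (2 * a - c') *
            Complex.exp (-(w : ℂ) ^ 2 / x) * F11 b c (-(w : ℂ) ^ 2) *
            besselI (c' - 1) (2 * ((y : ℂ) / x) * w) := by
  rw [Psi1, ← integral_comp_sq_div_Ioi _ hx,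
    setIntegral_congr_fun measurableSet_Ioi fun w hw =>
      psi1_integrand_comp_sq_div a b c c' hc' hx hy hw,
    integral_const_mul]
  ring

/-- Integral representation of `Ψ₁[a,b;c,c';−x, y²/x]` in terms of a modified
Bessel function, for real `x, y > 0`. -/
theorem psi1_bessel_integral_rep (a b c c' : ℂ) (x y : ℝ)
    (ha : 0 < a.re) (hc : ∀ n : ℕ, c ≠ -n) (hc' : ∀ n : ℕ, c' ≠ -n)
    (hx : 0 < x) (hy : 0 < y) :
    Psi1 a b c c' (-(x : ℂ)) ((y : ℂ) ^ 2 / x)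
      = 2 * Complex.Gamma c' / Complex.Gamma a * (x : ℂ) ^ (-a) *
          ((y : ℂ) / x) ^ (1 - c') *
          ∫ w in Set.Ioi (0 : ℝ), (w : ℂ) ^ (2 * a - c') *
            Complex.exp (-(w : ℂ) ^ 2 / x) * F11 b c (-(w : ℂ) ^ 2) *
            besselI (c' - 1) (2 * ((y : ℂ) / x) * w) :=
  psi1_bessel_integral_rep_general a b c c' x y hc' hx hy
end
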